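/- arXiv:1507.06370 — 4 statements merged into one kernel-verified Lean document; each statement's English description precedes it below -/
import Mathlib

section
/- There exists an absolute constant C such that the following holds. Let p, n, k be positive integers, γ ≥ 1, τ ≥ 1 and ε ∈ (0,1), with p ≥ γn and k ≥ C·γ·τ·√n. Suppose X₁,…,X_p ∈ ℝ^n satisfy the pseudorandomness condition with parameter τ and slack ε. Then the p×p matrix (M̃(x_i x_j))_{i,j∈[p]} = ((γk/p²)·⟨X_i,X_j⟩)_{i,j∈[p]} is positive semidefinite and satisfies: (a) Σ_{i,j∈[p]} |M̃(x_i x_j)| ≤ k²/2; (b) the objective value Σ_{i,j∈[p]} M̃(x_i x_j)·(1/n)⟨X_i,X_j⟩ is at least (1 − ε)·γk; (c) M̃(x_i²) = γkn/p² ≤ k/p for every i; (d) |M̃(x_i x_j)| ≤ γkτ√n/p² for all i ≠ j. -/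
/-!
`M̃` is the nonnegative multiple `γk/p²` of the Gram matrix of the `Xᵢ`, hence positive
semidefinite. By (P1) its diagonal entries are `γkn/p²`, and by (P2) the off-diagonal ones are at
most `γkτ√n/p²` in absolute value, so the total mass is at most `γkn/p + γkτ√n ≤ k + k²/4 ≤ k²/2`
once `p ≥ γn` and `k ≥ 4γτ√n` (so `C = 4` works). The objective is `γk/(p²n) · ‖XXᵀ‖_F²`,
which (P7) bounds from below.
-/

open scoped BigOperators

noncomputable section

/-- Euclidean inner product on `ℝⁿ`. -/
def dotR {n : ℕ} (x y : Fin n → ℝ) : ℝ := ∑ a, x a * y a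

/-- The pseudorandomness condition (P1)-(P7) on the (scaled) data vectors `X₁, …, X_p ∈ ℝⁿ`,
with parameter `τ ≥ 1` and slack `ε ∈ (0,1)`. -/
def PseudoRandom (n p : ℕ) (X : Fin p → Fin n → ℝ) (τ ε : ℝ) : Prop :=
  (∀ i, dotR (X i) (X i) = n) ∧
  (∀ i j, i ≠ j → |dotR (X i) (X j)| ≤ τ * Real.sqrt n) ∧
  (∀ i j, i ≠ j →
    |∑ l ∈ Finset.univ \ {i, j}, (dotR (X i) (X l)) ^ 3 * dotR (X j) (X l)| ≤
      τ * (n : ℝ) ^ ((3 : ℝ) / 2) * p) ∧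
  (∀ i j s t : Fin p, i ≠ j → i ≠ s → i ≠ t → j ≠ s → j ≠ t → s ≠ t →
    |∑ l, dotR (X i) (X l) * dotR (X j) (X l) * dotR (X s) (X l) * dotR (X t) (X l)| ≤
      τ * (n : ℝ) ^ 2 * Real.sqrt p) ∧
  (∀ s t, s ≠ t → |∑ i, dotR (X i) (X s) * dotR (X i) (X t)| ≤ τ * Real.sqrt n * p) ∧
  (∀ s t, s ≠ t →
    |∑ i, ∑ l, (dotR (X i) (X l)) ^ 2 * dotR (X s) (X l) * dotR (X t) (X l)| ≤
      τ * (n : ℝ) ^ ((3 : ℝ) / 2) * (p : ℝ) ^ 2) ∧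
  ((1 - ε) * n * (p : ℝ) ^ 2 ≤ ∑ i, ∑ j, (dotR (X i) (X j)) ^ 2)

/-- The degree-2 pseudo-moments `M̃(x_i x_j) = (γ k / p²) ⟨X_i, X_j⟩`. -/
def tM (n p : ℕ) (X : Fin p → Fin n → ℝ) (γ k : ℝ) (i j : Fin p) : ℝ :=
  γ * k / (p : ℝ) ^ 2 * dotR (X i) (X j)

open Finset Matrix

lemma dotR_eq_inner {n : ℕ} (x y : Fin n → ℝ) :
    dotR x y = inner ℝ (WithLp.toLp 2 x) (WithLp.toLp 2 y) := by
  simp [dotR, EuclideanSpace.inner_toLp_toLp, dotProduct, mul_comm]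

lemma posSemidef_of_dotR {ι : Type*} [Fintype ι] {n : ℕ} (X : ι → Fin n → ℝ) :
    (Matrix.of fun i j => dotR (X i) (X j)).PosSemidef := by
  have hgram : (Matrix.of fun i j => dotR (X i) (X j)) = gram ℝ (fun i => WithLp.toLp 2 (X i)) :=
    Matrix.ext fun i j => dotR_eq_inner _ _
  exact hgram ▸ posSemidef_gram ℝ _

lemma sum_sum_abs_le {ι : Type*} [Fintype ι] [DecidableEq ι] (A : ι → ι → ℝ) {d b : ℝ}
    (hdiag : ∀ i, |A i i| ≤ d) (hoff : ∀ i j, i ≠ j → |A i j| ≤ b) (hb : 0 ≤ b) :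
    ∑ i, ∑ j, |A i j| ≤ Fintype.card ι * (d + Fintype.card ι * b) := by
  have hrow : ∀ i, ∑ j, |A i j| ≤ d + Fintype.card ι * b := fun i => calc
    ∑ j, |A i j| ≤ ∑ j, ((if i = j then d else 0) + b) := by
      refine sum_le_sum fun j _ => ?_
      split_ifs with hij
      · subst hij; linarith [hdiag i]
      · simpa using hoff i j hij
    _ = d + Fintype.card ι * b := by simp [sum_add_distrib]
  calc ∑ i, ∑ j, |A i j| ≤ ∑ _i : ι, (d + Fintype.card ι * b) := sum_le_sum fun i _ => hrow i
    _ = Fintype.card ι * (d + Fintype.card ι * b) := by rw [sum_const, card_univ, nsmul_eq_mul]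

section tM

variable {n p : ℕ} (X : Fin p → Fin n → ℝ) {γ k : ℝ}

lemma of_tM_eq_smul :
    Matrix.of (tM n p X γ k) = (γ * k / (p : ℝ) ^ 2) • Matrix.of fun i j => dotR (X i) (X j) :=
  rfl

lemma posSemidef_of_tM (hγk : 0 ≤ γ * k) : (Matrix.of (tM n p X γ k)).PosSemidef := by
  rw [of_tM_eq_smul]
  exact (posSemidef_of_dotR X).smul (div_nonneg hγk (sq_nonneg _))

lemma tM_self {i : Fin p} (hi : dotR (X i) (X i) = n) :
    tM n p X γ k i i = γ * k * n / (p : ℝ) ^ 2 := by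
  rw [tM, hi]; ring

lemma abs_tM_le {i j : Fin p} {b : ℝ} (hij : |dotR (X i) (X j)| ≤ b) (hγk : 0 ≤ γ * k) :
    |tM n p X γ k i j| ≤ γ * k * b / (p : ℝ) ^ 2 := by
  have hc : 0 ≤ γ * k / (p : ℝ) ^ 2 := div_nonneg hγk (sq_nonneg _)
  rw [tM, abs_mul, abs_of_nonneg hc]
  exact (mul_le_mul_of_nonneg_left hij hc).trans_eq (by ring)

lemma sum_tM_mul_dotR :
    ∑ i, ∑ j, tM n p X γ k i j * (1 / (n : ℝ) * dotR (X i) (X j)) =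
      γ * k / ((p : ℝ) ^ 2 * n) * ∑ i, ∑ j, dotR (X i) (X j) ^ 2 := by
  simp only [tM, mul_sum]
  congr! 2
  ring

end tM

/-- Lemma `lem:M2`: properties of the degree-2 pseudo-moments `M̃` under the
pseudorandomness condition. -/
theorem tM_properties :
    ∃ C : ℝ, 0 < C ∧
      ∀ (n p k : ℕ) (γ τ ε : ℝ),
        0 < n → 0 < p → 0 < k →
        1 ≤ γ → 1 ≤ τ → 0 < ε → ε < 1 →
        γ * n ≤ (p : ℝ) → C * γ * τ * Real.sqrt n ≤ (k : ℝ) →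
        ∀ X : Fin p → Fin n → ℝ, PseudoRandom n p X τ ε →
        (Matrix.of fun i j => tM n p X γ k i j).PosSemidef ∧
        (∑ i, ∑ j, |tM n p X γ k i j|) ≤ (k : ℝ) ^ 2 / 2 ∧
        (1 - ε) * γ * k ≤
          (∑ i, ∑ j, tM n p X γ k i j * (1 / (n : ℝ) * dotR (X i) (X j))) ∧
        (∀ i, tM n p X γ k i i = γ * k * n / (p : ℝ) ^ 2 ∧
          γ * k * n / (p : ℝ) ^ 2 ≤ (k : ℝ) / p) ∧
        (∀ i j, i ≠ j → |tM n p X γ k i j| ≤ γ * k * τ * Real.sqrt n / (p : ℝ) ^ 2) := by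
  refine ⟨4, by norm_num, fun n p k γ τ ε hn hp hk hγ hτ _ _ hγn hkC X hX => ?_⟩
  obtain ⟨hnorm, hinner, -, -, -, -, hfrob⟩ := hX
  have hn' : (0 : ℝ) < n := by exact_mod_cast hn
  have hp' : (0 : ℝ) < p := by exact_mod_cast hp
  have hk' : (0 : ℝ) < k := by exact_mod_cast hk
  have hγk : 0 ≤ γ * k := by positivity
  have hsqrt : 1 ≤ Real.sqrt n := Real.one_le_sqrt.mpr (by exact_mod_cast hn)
  have hγn' : γ * n / p ≤ 1 := (div_le_one hp').mpr hγn
  have hγτ : γ * τ * Real.sqrt n ≤ k / 4 := by linarith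
  have hk4 : 4 ≤ (k : ℝ) := by nlinarith [mul_le_mul hγ hτ zero_le_one (by linarith)]
  have hdiag_le : γ * k * n / (p : ℝ) ^ 2 ≤ k / p := calc
    γ * k * n / (p : ℝ) ^ 2 = k / p * (γ * n / p) := by field_simp
    _ ≤ k / p := mul_le_of_le_one_right (by positivity) hγn'
  have habs_diag : ∀ i, |dotR (X i) (X i)| ≤ n := fun i => by rw [hnorm, abs_of_nonneg hn'.le]
  refine ⟨posSemidef_of_tM X hγk, ?_, ?_, fun i => ⟨tM_self X (hnorm i), hdiag_le⟩,
    fun i j hij => by simpa [mul_assoc] using abs_tM_le X (hinner i j hij) hγk⟩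
  · calc ∑ i, ∑ j, |tM n p X γ k i j|
        ≤ p * (γ * k * n / (p : ℝ) ^ 2 + p * (γ * k * (τ * Real.sqrt n) / (p : ℝ) ^ 2)) := by
          simpa using sum_sum_abs_le (tM n p X γ k) (fun i => abs_tM_le X (habs_diag i) hγk)
            (fun i j hij => abs_tM_le X (hinner i j hij) hγk) (by positivity)
      _ = k * (γ * n / p) + k * (γ * τ * Real.sqrt n) := by field_simp
      _ ≤ k * 1 + k * (k / 4) := by gcongr
      _ ≤ (k : ℝ) ^ 2 / 2 := by nlinarith
  · rw [sum_tM_mul_dotR]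
    calc (1 - ε) * γ * k = γ * k / ((p : ℝ) ^ 2 * n) * ((1 - ε) * n * (p : ℝ) ^ 2) := by
          field_simp
      _ ≤ _ := mul_le_mul_of_nonneg_left hfrob (by positivity)

end
end

section
/- There exists an absolute constant C such that the following holds. Let p, n, k be positive integers, γ ≥ 1, τ ≥ 1 and ε ∈ (0,1), with p ≥ γn and k ≥ C·γ·τ·√n. Suppose X₁,…,X_p ∈ ℝ^n satisfy the pseudorandomness condition with parameter τ and slack ε. Then there exists an assignment M' of real values to monomials of degree at most 2 in x₁,…,x_p with M'(1) = 1 such that: the p×p matrix (M'(x_i x_j))_{i,j} is positive semidefinite; Σ_{i∈[p]} M'(x_i²) = k; Σ_{i,j∈[p]} |M'(x_i x_j)| ≤ k²; and the objective value Σ_{i,j∈[p]} M'(x_i x_j)·(1/n)⟨X_i,X_j⟩ is at least (1 − ε)·γk. -/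
open scoped BigOperators

noncomputable section

/-!
Take `M = a I + c G`, where `G = (⟨X_i, X_j⟩)` is the Gram matrix of the data, `c = γ k / p²` and
`a = k / p - c n`, which is nonnegative exactly because `p ≥ γ n`. As a nonnegative combination of
`I` and a Gram matrix, `M` is positive semidefinite, and by (P1) its trace is `p (a + c n) = k`.
By (P2) its off-diagonal entries are at most `c τ √n`, so its absolute sum is at most
`k + γ τ √n k ≤ k²` once `k ≥ 2 γ τ √n`; by (P7) the objective is at least
`(c / n) ‖G‖_F² ≥ (1 - ε) γ k`.
-/

open Matrix

namespace Matrix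

variable {α R : Type*} [Zero R] [One R]

def pairMoments (A : Matrix α α R) (hA : A.IsSymm) (m : Multiset α) : R :=
  if h : Multiset.card m = 2 then
    Sym2.lift ⟨A, fun i j => hA.apply j i⟩ ((Sym2.equivMultiset α).symm ⟨m, h⟩)
  else if Multiset.card m = 0 then 1 else 0

@[simp]
theorem pairMoments_zero (A : Matrix α α R) (hA : A.IsSymm) : pairMoments A hA 0 = 1 := by
  simp [pairMoments]

@[simp]
theorem pairMoments_pair (A : Matrix α α R) (hA : A.IsSymm) (i j : α) :
    pairMoments A hA {i, j} = A i j := by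
  rw [pairMoments, dif_pos (by simp)]
  rfl

end Matrix

section Gram

variable {ι : Type*} {n : ℕ} (X : ι → Fin n → ℝ)

def dotRGram : Matrix ι ι ℝ := Matrix.of fun i j => dotR (X i) (X j)

theorem isSymm_dotRGram : (dotRGram X).IsSymm :=
  IsSymm.ext fun i j => by simp only [dotRGram, of_apply, dotR, mul_comm]

theorem dotRGram_eq_mul_transpose [Fintype ι] :
    dotRGram X = Matrix.of X * (Matrix.of X)ᵀ := by
  ext i j
  simp [dotRGram, dotR, Matrix.mul_apply]

variable [DecidableEq ι] (a c : ℝ)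

def shiftedGram : Matrix ι ι ℝ := a • 1 + c • dotRGram X

theorem shiftedGram_apply (i j : ι) :
    shiftedGram X a c i j = (if i = j then a else 0) + c * dotR (X i) (X j) := by
  simp [shiftedGram, dotRGram, Matrix.one_apply]

theorem isSymm_shiftedGram : (shiftedGram X a c).IsSymm := (isSymm_one.smul a).add ((isSymm_dotRGram X).smul c)

variable [Fintype ι] {X a c}

theorem posSemidef_shiftedGram (ha : 0 ≤ a) (hc : 0 ≤ c) : (shiftedGram X a c).PosSemidef := by
  rw [shiftedGram, dotRGram_eq_mul_transpose, ← conjTranspose_eq_transpose_of_trivial]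
  exact (PosSemidef.one.smul ha).add ((posSemidef_self_mul_conjTranspose _).smul hc)

section NormalizedRows

variable (hdiag : ∀ i, dotR (X i) (X i) = n)
include hdiag

theorem sum_shiftedGram_diag :
    ∑ i, shiftedGram X a c i i = Fintype.card ι * (a + c * n) := by
  simp only [shiftedGram_apply, ↓reduceIte, hdiag, Finset.sum_const, Finset.card_univ,
    nsmul_eq_mul]

theorem sum_abs_shiftedGram_le {β : ℝ} (ha : 0 ≤ a) (hc : 0 ≤ c) (hβ : 0 ≤ β)
    (hoff : ∀ i j, i ≠ j → |dotR (X i) (X j)| ≤ β) :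
    ∑ i, ∑ j, |shiftedGram X a c i j| ≤
      Fintype.card ι * (a + c * n) + Fintype.card ι ^ 2 * (c * β) := by
  have hentry : ∀ i j, |shiftedGram X a c i j| ≤ (if i = j then a + c * n else 0) + c * β := by
    intro i j
    rw [shiftedGram_apply]
    obtain rfl | hij := eq_or_ne i j
    · simpa [hdiag, abs_of_nonneg (by positivity : 0 ≤ a + c * n)] using mul_nonneg hc hβ
    · simpa [hij, abs_mul, abs_of_nonneg hc] using mul_le_mul_of_nonneg_left (hoff i j hij) hc
  calc ∑ i, ∑ j, |shiftedGram X a c i j|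
      ≤ ∑ i : ι, ∑ j : ι, ((if i = j then a + c * n else 0) + c * β) :=
        Finset.sum_le_sum fun i _ => Finset.sum_le_sum fun j _ => hentry i j
    _ = Fintype.card ι * (a + c * n) + Fintype.card ι ^ 2 * (c * β) := by
        simp only [Finset.sum_add_distrib, Finset.sum_ite_eq, Finset.mem_univ, ↓reduceIte,
          Finset.sum_const, Finset.card_univ, nsmul_eq_mul]
        ring

theorem sum_shiftedGram_mul_dotR (hn : n ≠ 0) :
    ∑ i, ∑ j, shiftedGram X a c i j * (1 / n * dotR (X i) (X j)) =
      Fintype.card ι * a + c / n * ∑ i, ∑ j, dotR (X i) (X j) ^ 2 := by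
  simp only [shiftedGram_apply, add_mul, ite_mul, zero_mul, Finset.sum_add_distrib,
    Finset.sum_ite_eq, Finset.mem_univ, if_true, hdiag, Finset.mul_sum]
  have hn' : (n : ℝ) ≠ 0 := Nat.cast_ne_zero.mpr hn
  simp only [one_div_mul_cancel hn', mul_one, Finset.sum_const, Finset.card_univ, nsmul_eq_mul]
  congr 1
  refine Finset.sum_congr rfl fun i _ => Finset.sum_congr rfl fun j _ => ?_
  ring

end NormalizedRows
end Gram

/-- Corollary `cor:M2`: existence of degree-2 pseudo-moments satisfying the
degree-2 constraints exactly, with a large objective value.  The assignment `M'` of values to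
monomials of degree at most 2 is encoded as a function on multisets of variables of size ≤ 2. -/
theorem exists_degree2_pseudomoments :
    ∃ C : ℝ, 0 < C ∧
      ∀ (n p k : ℕ) (γ τ ε : ℝ),
        0 < n → 0 < p → 0 < k →
        1 ≤ γ → 1 ≤ τ → 0 < ε → ε < 1 →
        γ * n ≤ (p : ℝ) → C * γ * τ * Real.sqrt n ≤ (k : ℝ) →
        ∀ X : Fin p → Fin n → ℝ, PseudoRandom n p X τ ε →
        ∃ M' : Multiset (Fin p) → ℝ,
          M' 0 = 1 ∧
          (Matrix.of fun i j => M' {i, j}).PosSemidef ∧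
          (∑ i : Fin p, M' {i, i}) = (k : ℝ) ∧
          (∑ i : Fin p, ∑ j : Fin p, |M' {i, j}|) ≤ (k : ℝ) ^ 2 ∧
          (1 - ε) * γ * k ≤
            ∑ i : Fin p, ∑ j : Fin p, M' {i, j} * (1 / (n : ℝ) * dotR (X i) (X j)) := by
  refine ⟨2, two_pos, ?_⟩
  rintro n p k γ τ ε hn hp hk hγ hτ - - hγn hk_large X ⟨hdiag, hoff, -, -, -, -, hfrob⟩
  have hp' : (0 : ℝ) < p := Nat.cast_pos.mpr hp
  set c : ℝ := γ * k / p ^ 2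
  set a : ℝ := k / p - c * n
  have hc : 0 ≤ c := by positivity
  have ha : 0 ≤ a := by
    have : c * n = k / p * (γ * n / p) := by simp only [c]; field_simp
    rw [sub_nonneg, this]
    exact mul_le_of_le_one_right (by positivity) ((div_le_one hp').mpr hγn)
  have htrace : p * (a + c * n) = k := by simp only [a]; field_simp; ring
  refine ⟨pairMoments (shiftedGram X a c) (isSymm_shiftedGram X a c), pairMoments_zero _ _,
    ?_, ?_, ?_, ?_⟩ <;> simp only [pairMoments_pair]
  · exact posSemidef_shiftedGram ha hc
  · rw [sum_shiftedGram_diag hdiag, Fintype.card_fin, htrace]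
  · have hs : 1 ≤ γ * τ * √n := one_le_mul_of_one_le_of_one_le
      (one_le_mul_of_one_le_of_one_le hγ hτ) (Real.one_le_sqrt.mpr (by exact_mod_cast hn))
    have hk' : (0 : ℝ) < k := Nat.cast_pos.mpr hk
    calc ∑ i, ∑ j, |shiftedGram X a c i j|
        ≤ p * (a + c * n) + p ^ 2 * (c * (τ * √n)) := by
          simpa using sum_abs_shiftedGram_le hdiag ha hc (by positivity) hoff
      _ = k + γ * τ * √n * k := by rw [htrace]; simp only [c]; field_simp
      _ ≤ 2 * γ * τ * √n * k := by nlinarith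
      _ ≤ k ^ 2 := by rw [sq]; gcongr
  · rw [sum_shiftedGram_mul_dotR hdiag hn.ne']
    calc (1 - ε) * γ * k = c / n * ((1 - ε) * n * p ^ 2) := by simp only [c]; field_simp
      _ ≤ c / n * ∑ i, ∑ j, dotR (X i) (X j) ^ 2 := by gcongr
      _ ≤ _ := le_add_of_nonneg_left (by positivity)
end
end

section
/- There exist absolute constants C and s such that the following holds. Let τ ≥ 1, let k, n, p be positive integers and γ a real with 1 ≤ γ ≤ n, p = ⌈1.1·γn⌉, and k ≥ C·γ·√n·τ^s. Suppose X₁,…,X_p ∈ ℝ^n satisfy the pseudorandomness condition with parameter τ and some slack ε ∈ (0,1). Then the degree-4 array Q satisfies: (a) the p²×p² matrix with entries Q(x_i x_j x_s x_t) in position ((i,j),(s,t)) is positive semidefinite; (b) Q(x_i³ x_j) = (3k/p)·M̃(x_i x_j) for all i,j ∈ [p]; (c) the p×p matrix G defined by G_{st} = Σ_{i∈[p]} Q(x_i² x_s x_t) − k·M̃(x_s x_t) is positive semidefinite and satisfies |G_{ss}| ≤ C·τ²·γk²/p² for all s and |G_{st}| ≤ C·τ·γk²/(p²√n) for all s ≠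 t; (d) Σ_{i,j,s,t∈[p]} |Q(x_i x_j x_s x_t)| ≤ k⁴/3. -/
open scoped BigOperators

noncomputable section

/-- The degree-4 array `Q(x_i x_j x_s x_t)`. -/
def Qarr (n p : ℕ) (X : Fin p → Fin n → ℝ) (γ k : ℝ) (i j s t : Fin p) : ℝ :=
  γ * k ^ 2 / ((p : ℝ) ^ 3 * n) *
    (dotR (X i) (X j) * dotR (X s) (X t) + dotR (X i) (X s) * dotR (X j) (X t) +
      dotR (X i) (X t) * dotR (X j) (X s))


/-! With `G` the Gram matrix of the `X_i` and `c = γk²/(p³n)`, `Q = c (G_ij G_st + G_is G_jt +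
G_it G_js)`. The first term is the rank-one matrix `vec G (vec G)ᵀ` and the other two form half
the Gram matrix of the symmetric tensors `X_i ⊗ X_j + X_j ⊗ X_i`, so `Q` is PSD. Because
`‖X_i‖² = n`, the matrix in (c) is `2c G²`, which is PSD, with diagonal controlled by (P1)-(P2)
and off-diagonal entries by (P5). Finally `∑ |Q| ≤ 3c (∑ |G_ij|)²`, and (P2) gives
`∑ |G_ij| ≤ 2p²τ√n`; since `p ≈ 1.1γn`, the choice `C = 9`, `s = 1` suffices. -/

open Finset Matrix

section Gram

variable {ι : Type*} [Fintype ι] {n : ℕ}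

lemma sum_sum_pairings_eq_three_mul_sq {R : Type*} [CommSemiring R] (h : ι → ι → R) :
    ∑ i, ∑ j, ∑ s, ∑ t, (h i j * h s t + h i s * h j t + h i t * h j s)
      = 3 * (∑ i, ∑ j, h i j) ^ 2 := by
  simp only [sum_add_distrib, ← mul_sum, ← sum_mul]
  ring

lemma sum_sum_symmTensor_mul_symmTensor (u v w z : Fin n → ℝ) :
    ∑ a, ∑ b, (u a * v b + u b * v a) * (w a * z b + w b * z a)
      = 2 * (dotR u w * dotR v z + dotR u z * dotR v w) := by
  have expand : ∀ a b, (u a * v b + u b * v a) * (w a * z b + w b * z a) =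
      u a * w a * (v b * z b) + u a * z a * (v b * w b) +
        (v a * w a * (u b * z b) + v a * z a * (u b * w b)) := fun _ _ => by ring
  simp only [expand, sum_add_distrib, ← mul_sum, ← sum_mul, dotR]
  ring

lemma posSemidef_dotR_mul_dotR_add_swap (X : ι → Fin n → ℝ) :
    (Matrix.of fun (ij st : ι × ι) =>
      dotR (X ij.1) (X st.1) * dotR (X ij.2) (X st.2) +
        dotR (X ij.1) (X st.2) * dotR (X ij.2) (X st.1)).PosSemidef := by
  let W : Matrix (ι × ι) (Fin n × Fin n) ℝ :=
    Matrix.of fun ij ab => X ij.1 ab.1 * X ij.2 ab.2 + X ij.1 ab.2 * X ij.2 ab.1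
  convert (posSemidef_self_mul_conjTranspose W).smul (show (0 : ℝ) ≤ 2⁻¹ by norm_num) using 1
  ext ij st
  simp only [W, of_apply, Matrix.smul_apply, mul_apply, conjTranspose_apply, star_trivial,
    Fintype.sum_prod_type, sum_sum_symmTensor_mul_symmTensor, smul_eq_mul]
  ring

end Gram

lemma Finset.sum_le_add_card_nsmul_of_ne {ι M : Type*} [Fintype ι] [DecidableEq ι]
    [AddCommMonoid M] [PartialOrder M] [IsOrderedAddMonoid M] (f : ι → M) (s : ι) {a b : M}
    (hs : f s ≤ a) (hb : 0 ≤ b) (h : ∀ i, i ≠ s → f i ≤ b) :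
    ∑ i, f i ≤ a + Fintype.card ι • b := by
  rw [← add_sum_erase _ _ (mem_univ s)]
  gcongr
  calc ∑ i ∈ univ.erase s, f i ≤ ∑ _i ∈ univ.erase s, b :=
        sum_le_sum fun i hi => h i (ne_of_mem_erase hi)
    _ ≤ ∑ _i, b := sum_le_sum_of_subset_of_nonneg (erase_subset _ _) fun _ _ _ => hb
    _ = Fintype.card ι • b := by simp

section PseudoMoments

variable {n p : ℕ} (X : Fin p → Fin n → ℝ) (γ k : ℝ)

lemma posSemidef_Qarr (hγ : 0 ≤ γ) :
    (Matrix.of fun (ij st : Fin p × Fin p) => Qarr n p X γ k ij.1 ij.2 st.1 st.2).PosSemidef := by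
  let v : Fin p × Fin p → ℝ := fun ij => dotR (X ij.1) (X ij.2)
  have hc : 0 ≤ γ * k ^ 2 / ((p : ℝ) ^ 3 * n) := by positivity
  convert ((posSemidef_vecMulVec_self_star v).add
    (posSemidef_dotR_mul_dotR_add_swap X)).smul hc using 1
  ext ⟨i, j⟩ ⟨s, t⟩
  simp only [Qarr, v, of_apply, Matrix.smul_apply, Matrix.add_apply, vecMulVec_apply,
    star_trivial, smul_eq_mul]
  ring

lemma Qarr_self_self_self (hn : n ≠ 0) (hnorm : ∀ i, dotR (X i) (X i) = n) (i j : Fin p) :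
    Qarr n p X γ k i i i j = 3 * k / p * tM n p X γ k i j := by
  have hp : (p : ℝ) ≠ 0 := by have := i.pos; positivity
  simp only [Qarr, tM, hnorm]
  field_simp
  ring

lemma sum_Qarr_diag_sub_tM (hn : n ≠ 0) (hnorm : ∀ i, dotR (X i) (X i) = n) (s t : Fin p) :
    (∑ i, Qarr n p X γ k i i s t) - k * tM n p X γ k s t
      = 2 * (γ * k ^ 2 / ((p : ℝ) ^ 3 * n)) * ∑ i, dotR (X i) (X s) * dotR (X i) (X t) := by
  have hp : (p : ℝ) ≠ 0 := by have := s.pos; positivity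
  simp only [Qarr, tM, hnorm, mul_comm (dotR (X _) (X t)), sum_add_distrib, ← mul_sum,
    sum_const, card_univ, Fintype.card_fin, nsmul_eq_mul]
  field_simp
  ring

lemma posSemidef_sum_Qarr_diag_sub_tM (hn : n ≠ 0) (hnorm : ∀ i, dotR (X i) (X i) = n)
    (hγ : 0 ≤ γ) :
    (Matrix.of fun s t => (∑ i, Qarr n p X γ k i i s t) - k * tM n p X γ k s t).PosSemidef := by
  let B : Matrix (Fin p) (Fin p) ℝ := Matrix.of fun i s => dotR (X i) (X s)
  have hc : 0 ≤ 2 * (γ * k ^ 2 / ((p : ℝ) ^ 3 * n)) := by positivity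
  convert (posSemidef_conjTranspose_mul_self B).smul hc using 1
  ext s t
  simp [sum_Qarr_diag_sub_tM X γ k hn hnorm, B, mul_apply]

lemma sum_dotR_mul_self_le {b : ℝ} (hnorm : ∀ i, dotR (X i) (X i) = n)
    (hcross : ∀ i j, i ≠ j → |dotR (X i) (X j)| ≤ b) (s : Fin p) :
    ∑ i, dotR (X i) (X s) * dotR (X i) (X s) ≤ (n : ℝ) ^ 2 + p * b ^ 2 := by
  simpa using sum_le_add_card_nsmul_of_ne (fun i => dotR (X i) (X s) * dotR (X i) (X s)) s
    (by simp [hnorm, sq]) (sq_nonneg b) fun i hi => by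
      rw [← abs_mul_abs_self, sq]
      exact mul_self_le_mul_self (abs_nonneg _) (hcross i s hi)

lemma sum_sum_abs_dotR_le {b : ℝ} (hnorm : ∀ i, dotR (X i) (X i) = n)
    (hcross : ∀ i j, i ≠ j → |dotR (X i) (X j)| ≤ b) (hb : 0 ≤ b) :
    ∑ i, ∑ j, |dotR (X i) (X j)| ≤ p * (n + p * b) := by
  calc ∑ i, ∑ j, |dotR (X i) (X j)| ≤ ∑ _i : Fin p, ((n : ℝ) + p * b) := by
        gcongr with i
        simpa using sum_le_add_card_nsmul_of_ne (fun j => |dotR (X i) (X j)|) i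
          (by simp [hnorm]) hb fun j hj => hcross i j (Ne.symm hj)
    _ = p * (n + p * b) := by rw [sum_const, card_univ, Fintype.card_fin, nsmul_eq_mul]

lemma abs_sum_Qarr_diag_sub_tM_self_le {τ : ℝ} (hn : n ≠ 0) (hnp : n ≤ p) (hτ : 1 ≤ τ)
    (hγ : 0 ≤ γ) (hnorm : ∀ i, dotR (X i) (X i) = n)
    (hcross : ∀ i j, i ≠ j → |dotR (X i) (X j)| ≤ τ * √n) (s : Fin p) :
    |(∑ i, Qarr n p X γ k i i s s) - k * tM n p X γ k s s| ≤
      4 * τ ^ 2 * γ * k ^ 2 / (p : ℝ) ^ 2 := by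
  have hp : (p : ℝ) ≠ 0 := by have := s.pos; positivity
  have hn' : (0 : ℝ) < n := by positivity
  have hsq : (τ * √n) ^ 2 = τ ^ 2 * n := by rw [mul_pow, Real.sq_sqrt hn'.le]
  have hn_le : (n : ℝ) ^ 2 ≤ p * τ ^ 2 * n := by
    have : (n : ℝ) ≤ p := by exact_mod_cast hnp
    have : 1 ≤ τ ^ 2 := one_le_pow₀ hτ
    nlinarith
  rw [sum_Qarr_diag_sub_tM X γ k hn hnorm,
    abs_of_nonneg (mul_nonneg (by positivity) (sum_nonneg fun i _ => mul_self_nonneg _))]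
  calc 2 * (γ * k ^ 2 / ((p : ℝ) ^ 3 * n)) * ∑ i, dotR (X i) (X s) * dotR (X i) (X s)
      ≤ 2 * (γ * k ^ 2 / ((p : ℝ) ^ 3 * n)) * ((n : ℝ) ^ 2 + p * (τ * √n) ^ 2) := by
        gcongr
        exact sum_dotR_mul_self_le X hnorm hcross s
    _ ≤ 2 * (γ * k ^ 2 / ((p : ℝ) ^ 3 * n)) * (2 * p * τ ^ 2 * n) := by
        gcongr
        rw [hsq]
        linarith
    _ = 4 * τ ^ 2 * γ * k ^ 2 / (p : ℝ) ^ 2 := by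
        field_simp
        ring

lemma abs_sum_Qarr_diag_sub_tM_le {τ : ℝ} (hn : n ≠ 0) (hγ : 0 ≤ γ)
    (hnorm : ∀ i, dotR (X i) (X i) = n) {s t : Fin p}
    (hcov : |∑ i, dotR (X i) (X s) * dotR (X i) (X t)| ≤ τ * √n * p) :
    |(∑ i, Qarr n p X γ k i i s t) - k * tM n p X γ k s t| ≤
      2 * τ * γ * k ^ 2 / ((p : ℝ) ^ 2 * √n) := by
  have hp : (p : ℝ) ≠ 0 := by have := s.pos; positivity
  have hn' : (0 : ℝ) < n := by positivity
  rw [sum_Qarr_diag_sub_tM X γ k hn hnorm, abs_mul, abs_of_nonneg (by positivity)]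
  calc 2 * (γ * k ^ 2 / ((p : ℝ) ^ 3 * n)) * |∑ i, dotR (X i) (X s) * dotR (X i) (X t)|
      ≤ 2 * (γ * k ^ 2 / ((p : ℝ) ^ 3 * n)) * (τ * √n * p) := by gcongr
    _ = 2 * τ * γ * k ^ 2 / ((p : ℝ) ^ 2 * √n) := by
        have : (0 : ℝ) < √n := Real.sqrt_pos.mpr hn'
        field_simp
        rw [Real.sq_sqrt hn'.le]
        ring

lemma sum_abs_Qarr_le (hγ : 0 ≤ γ) :
    ∑ i, ∑ j, ∑ s, ∑ t, |Qarr n p X γ k i j s t| ≤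
      3 * (γ * k ^ 2 / ((p : ℝ) ^ 3 * n)) * (∑ i, ∑ j, |dotR (X i) (X j)|) ^ 2 := by
  have hc : 0 ≤ γ * k ^ 2 / ((p : ℝ) ^ 3 * n) := by positivity
  calc ∑ i, ∑ j, ∑ s, ∑ t, |Qarr n p X γ k i j s t|
      ≤ ∑ i, ∑ j, ∑ s, ∑ t, γ * k ^ 2 / ((p : ℝ) ^ 3 * n) *
          (|dotR (X i) (X j)| * |dotR (X s) (X t)| + |dotR (X i) (X s)| * |dotR (X j) (X t)| +
            |dotR (X i) (X t)| * |dotR (X j) (X s)|) := by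
        gcongr with i _ j _ s _ t _
        rw [Qarr, abs_mul, abs_of_nonneg hc]
        gcongr
        exact (abs_add_three _ _ _).trans_eq (by simp only [abs_mul])
    _ = 3 * (γ * k ^ 2 / ((p : ℝ) ^ 3 * n)) * (∑ i, ∑ j, |dotR (X i) (X j)|) ^ 2 := by
        simp only [← mul_sum]
        rw [sum_sum_pairings_eq_three_mul_sq fun i j => |dotR (X i) (X j)|]
        ring

lemma sum_abs_Qarr_le_of_abs_dotR_le {τ : ℝ} (hn : n ≠ 0) (hnp : n ≤ p) (hτ : 1 ≤ τ)
    (hγ : 0 ≤ γ) (hnorm : ∀ i, dotR (X i) (X i) = n)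
    (hcross : ∀ i j, i ≠ j → |dotR (X i) (X j)| ≤ τ * √n) :
    ∑ i, ∑ j, ∑ s, ∑ t, |Qarr n p X γ k i j s t| ≤ 12 * τ ^ 2 * γ * k ^ 2 * p := by
  have hn' : (1 : ℝ) ≤ n := by exact_mod_cast Nat.one_le_iff_ne_zero.mpr hn
  have hnp' : (n : ℝ) ≤ p := by exact_mod_cast hnp
  have hsqrt : (1 : ℝ) ≤ √n := Real.one_le_sqrt.mpr hn'
  have hsqrt_sq : √n * √n = n := Real.mul_self_sqrt (by positivity)
  have hT : ∑ i, ∑ j, |dotR (X i) (X j)| ≤ 2 * p ^ 2 * (τ * √n) := by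
    have hsqrt_le : √n ≤ p := by nlinarith
    have : (n : ℝ) ≤ p * (τ * √n) := by
      nlinarith [mul_le_mul_of_nonneg_right hsqrt_le (Real.sqrt_nonneg n)]
    nlinarith [sum_sum_abs_dotR_le X hnorm hcross (by positivity)]
  calc ∑ i, ∑ j, ∑ s, ∑ t, |Qarr n p X γ k i j s t|
      ≤ 3 * (γ * k ^ 2 / ((p : ℝ) ^ 3 * n)) * (∑ i, ∑ j, |dotR (X i) (X j)|) ^ 2 :=
        sum_abs_Qarr_le X γ k hγ
    _ ≤ 3 * (γ * k ^ 2 / ((p : ℝ) ^ 3 * n)) * (2 * p ^ 2 * (τ * √n)) ^ 2 := by gcongr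
    _ = 12 * τ ^ 2 * γ * k ^ 2 * p := by
        have : (p : ℝ) ≠ 0 := by linarith
        field_simp
        rw [Real.sq_sqrt (by positivity)]
        ring

end PseudoMoments

lemma twelve_mul_le_pow_four_div_three {n p γ τ k : ℝ} (hn : 0 ≤ n) (hγ : 0 ≤ γ) (hτ : 0 ≤ τ)
    (hp : p ≤ 2.1 * γ * n) (hk : 9 * γ * √n * τ ≤ k) :
    12 * τ ^ 2 * γ * k ^ 2 * p ≤ k ^ 4 / 3 := by
  have hk2 : 81 * γ ^ 2 * n * τ ^ 2 ≤ k ^ 2 :=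
    calc 81 * γ ^ 2 * n * τ ^ 2 = (9 * γ * √n * τ) ^ 2 := by
          rw [mul_pow, mul_pow, mul_pow, Real.sq_sqrt hn]
          ring
      _ ≤ k ^ 2 := pow_le_pow_left₀ (by positivity) hk 2
  have hγp : 36 * τ ^ 2 * γ * p ≤ k ^ 2 := by
    nlinarith [mul_le_mul_of_nonneg_left hp (by positivity : 0 ≤ 36 * τ ^ 2 * γ),
      (by positivity : 0 ≤ γ ^ 2 * n * τ ^ 2)]
  nlinarith [mul_le_mul_of_nonneg_left hγp (sq_nonneg k)]

/-- Lemma `lem:Q`: properties of the degree-4 moments `Q`. -/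
theorem Qarr_properties :
    ∃ C s : ℝ, 0 < C ∧ 0 < s ∧
      ∀ (n p k : ℕ) (γ τ ε : ℝ),
        0 < n → 0 < k →
        1 ≤ τ → 1 ≤ γ → γ ≤ (n : ℝ) →
        p = ⌈(1.1 : ℝ) * γ * n⌉₊ →
        C * γ * Real.sqrt n * τ ^ s ≤ (k : ℝ) →
        0 < ε → ε < 1 →
        ∀ X : Fin p → Fin n → ℝ, PseudoRandom n p X τ ε →
        -- (a) PSDness of the p² × p² matrix form of Q
        (Matrix.of fun (ij st : Fin p × Fin p) =>
            Qarr n p X γ k ij.1 ij.2 st.1 st.2).PosSemidef ∧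
        -- (b) Q(x_i³ x_j) = (3k/p) M̃(x_i x_j)
        (∀ i j, Qarr n p X γ k i i i j = 3 * k / p * tM n p X γ k i j) ∧
        -- (c) G_{st} = Σ_i Q(x_i² x_s x_t) - k M̃(x_s x_t) is PSD and small
        ((Matrix.of fun s t =>
            (∑ i, Qarr n p X γ k i i s t) - k * tM n p X γ k s t).PosSemidef ∧
          (∀ s, |(∑ i, Qarr n p X γ k i i s s) - k * tM n p X γ k s s| ≤
            C * τ ^ 2 * γ * k ^ 2 / (p : ℝ) ^ 2) ∧
          (∀ s t, s ≠ t →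
            |(∑ i, Qarr n p X γ k i i s t) - k * tM n p X γ k s t| ≤
              C * τ * γ * k ^ 2 / ((p : ℝ) ^ 2 * Real.sqrt n))) ∧
        -- (d) ℓ¹ sparsity bound
        (∑ i, ∑ j, ∑ s, ∑ t, |Qarr n p X γ k i j s t|) ≤ (k : ℝ) ^ 4 / 3 := by
  refine ⟨9, 1, by norm_num, one_pos, ?_⟩
  rintro n p k γ τ ε hn - hτ hγ - hp hk - - X ⟨hnorm, hcross, -, -, hcov, -, -⟩
  rw [Real.rpow_one] at hk
  have hn0 : n ≠ 0 := hn.ne'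
  have hγ0 : 0 ≤ γ := by linarith
  have hγn : (1 : ℝ) ≤ γ * n := one_le_mul_of_one_le_of_one_le hγ (by exact_mod_cast hn)
  have hnp : n ≤ p := by
    have : (1.1 : ℝ) * γ * n ≤ p := hp ▸ Nat.le_ceil _
    exact_mod_cast (show (n : ℝ) ≤ p by nlinarith)
  have hp_le : (p : ℝ) ≤ 2.1 * γ * n := by
    have : (p : ℝ) < 1.1 * γ * n + 1 := hp ▸ Nat.ceil_lt_add_one (by positivity)
    linarith
  refine ⟨posSemidef_Qarr X γ k hγ0, Qarr_self_self_self X γ k hn0 hnorm,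
    ⟨posSemidef_sum_Qarr_diag_sub_tM X γ k hn0 hnorm hγ0, fun s => ?_, fun s t hst => ?_⟩, ?_⟩
  · refine (abs_sum_Qarr_diag_sub_tM_self_le X γ k hn0 hnp hτ hγ0 hnorm hcross s).trans ?_
    gcongr
    norm_num
  · refine (abs_sum_Qarr_diag_sub_tM_le X γ k hn0 hγ0 hnorm (hcov s t hst)).trans ?_
    gcongr
    norm_num
  · exact (sum_abs_Qarr_le_of_abs_dotR_le X γ k hn0 hnp hτ hγ0 hnorm hcross).trans
      (twelve_mul_le_pow_four_div_three (Nat.cast_nonneg n) hγ0 (by linarith) hp_le hk)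

end
end

section
/- Let m and n be positive integers, let A be an m×m real diagonal matrix, let D be an n×n real diagonal matrix, and let C be an n×m real matrix. Let Γ be the symmetric (m+n)×(m+n) block matrix Γ = [[A, Cᵀ], [C, D]]. Suppose there exists α > 0 such that A_{jj} ≥ (1/α)·Σ_{i∈[n]} |C_{ij}| for every j ∈ [m], and D_{ii} ≥ α·Σ_{j∈[m]} |C_{ij}| for every i ∈ [n]. Then Γ is positive semidefinite. -/
/-!
Conjugating `Γ` by a positive diagonal matrix `W = diag w` preserves positive semidefiniteness,
and `∑_{j ≠ i} |Γ i j| w j ≤ Γ i i w i` is exactly diagonal dominance of `W Γ W`. With weight `α`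
on the first block and `1` on the second, these are the two hypotheses, and Gershgorin's circle
theorem then puts every eigenvalue of `W Γ W` in `[0, ∞)`.
-/

open Matrix
open scoped ComplexOrder

namespace Matrix

section Dominance

variable {𝕜 ι : Type*} [RCLike 𝕜] [Fintype ι] [DecidableEq ι] {M : Matrix ι ι 𝕜}

lemma IsHermitian.hasEigenvalue_eigenvalues (hM : M.IsHermitian) (i : ι) :
    Module.End.HasEigenvalue (toLin' M) (hM.eigenvalues i : 𝕜) := by
  refine Module.End.hasEigenvalue_of_hasEigenvector (x := ⇑(hM.eigenvectorBasis i)) ⟨?_, ?_⟩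
  · rw [Module.End.mem_eigenspace_iff, toLin'_apply, mulVec_eigenvectorBasis,
      RCLike.real_smul_eq_coe_smul (K := 𝕜)]
  · simpa using hM.eigenvectorBasis.orthonormal.ne_zero i

lemma posSemidef_of_sum_norm_offDiag_le (hM : M.IsHermitian)
    (hdom : ∀ i, ∑ j ∈ Finset.univ.erase i, ‖M i j‖ ≤ RCLike.re (M i i)) : M.PosSemidef := by
  refine hM.posSemidef_iff_eigenvalues_nonneg.mpr fun i => ?_
  obtain ⟨k, hk⟩ := eigenvalue_mem_ball (hM.hasEigenvalue_eigenvalues i)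
  rw [Metric.mem_closedBall, dist_comm, dist_eq_norm] at hk
  simpa using (RCLike.re_le_norm (M k k - hM.eigenvalues i)).trans (hk.trans (hdom k))

lemma posSemidef_of_sum_norm_offDiag_mul_le (hM : M.IsHermitian) {w : ι → ℝ} (hw : ∀ i, 0 < w i)
    (hdom : ∀ i, ∑ j ∈ Finset.univ.erase i, ‖M i j‖ * w j ≤ RCLike.re (M i i) * w i) :
    M.PosSemidef := by
  set W : Matrix ι ι 𝕜 := diagonal fun i => (w i : 𝕜)
  set V : Matrix ι ι 𝕜 := diagonal fun i => ((w i)⁻¹ : 𝕜)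
  have hW : Wᴴ = W := by simp [W, diagonal_conjTranspose]
  have hV : Vᴴ = V := by simp [V, diagonal_conjTranspose]
  have hVW : V * W = 1 := by simp [V, W, diagonal_mul_diagonal, (hw _).ne']
  have hWV : W * V = 1 := by simp [V, W, diagonal_mul_diagonal, (hw _).ne']
  have hWMW_apply (i j : ι) : (W * M * W) i j = w i * M i j * w j := by
    simp [W, diagonal_mul, mul_diagonal]
  have hWMW : (W * M * W).PosSemidef := by
    have hWMW_herm := isHermitian_conjTranspose_mul_mul W hM
    rw [hW] at hWMW_herm
    refine posSemidef_of_sum_norm_offDiag_le hWMW_herm fun i => ?_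
    simp only [hWMW_apply, norm_mul, RCLike.norm_ofReal, abs_of_pos (hw _), RCLike.re_ofReal_mul,
      RCLike.re_mul_ofReal]
    calc ∑ j ∈ Finset.univ.erase i, w i * ‖M i j‖ * w j
        = w i * ∑ j ∈ Finset.univ.erase i, ‖M i j‖ * w j := by
          rw [Finset.mul_sum]; simp only [mul_assoc]
      _ ≤ w i * (RCLike.re (M i i) * w i) := mul_le_mul_of_nonneg_left (hdom i) (hw i).le
      _ = w i * RCLike.re (M i i) * w i := by ring
  have hM_eq : M = Vᴴ * (W * M * W) * V :=
    calc M = V * W * M * (W * V) := by rw [hVW, hWV, Matrix.one_mul, Matrix.mul_one]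
      _ = Vᴴ * (W * M * W) * V := by simp only [hV, Matrix.mul_assoc]
  rw [hM_eq]
  exact hWMW.conjTranspose_mul_mul_same V

end Dominance

section Blocks

variable {α m n : Type*} [SeminormedAddCommGroup α] [Fintype m] [Fintype n]
  [DecidableEq m] [DecidableEq n]
  {A : Matrix m m α} {B : Matrix m n α} {C : Matrix n m α} {D : Matrix n n α}

lemma sum_erase_norm_fromBlocks_inl_mul (hA : A.IsDiag) (w : m ⊕ n → ℝ) (j : m) :
    ∑ k ∈ Finset.univ.erase (Sum.inl j), ‖fromBlocks A B C D (Sum.inl j) k‖ * w k =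
      ∑ i, ‖B j i‖ * w (Sum.inr i) := by
  rw [Finset.sum_erase_eq_sub (Finset.mem_univ _), Fintype.sum_sum_type,
    add_sub_right_comm, ← Finset.sum_erase_eq_sub (Finset.mem_univ _)]
  have hA_offDiag : ∑ k ∈ Finset.univ.erase j, ‖A j k‖ * w (Sum.inl k) = 0 :=
    Finset.sum_eq_zero fun k hk => by simp [hA (Finset.ne_of_mem_erase hk).symm]
  simpa using hA_offDiag

lemma sum_erase_norm_fromBlocks_inr_mul (hD : D.IsDiag) (w : m ⊕ n → ℝ) (i : n) :
    ∑ k ∈ Finset.univ.erase (Sum.inr i), ‖fromBlocks A B C D (Sum.inr i) k‖ * w k =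
      ∑ j, ‖C i j‖ * w (Sum.inl j) := by
  rw [Finset.sum_erase_eq_sub (Finset.mem_univ _), Fintype.sum_sum_type,
    add_sub_assoc, ← Finset.sum_erase_eq_sub (Finset.mem_univ _)]
  have hD_offDiag : ∑ k ∈ Finset.univ.erase i, ‖D i k‖ * w (Sum.inr k) = 0 :=
    Finset.sum_eq_zero fun k hk => by simp [hD (Finset.ne_of_mem_erase hk).symm]
  simpa using hD_offDiag

end Blocks

end Matrix

theorem gershgorin_block_psd_general (m n : ℕ)
    (A : Matrix (Fin m) (Fin m) ℝ) (D : Matrix (Fin n) (Fin n) ℝ)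
    (C : Matrix (Fin n) (Fin m) ℝ)
    (hA : A.IsDiag) (hD : D.IsDiag)
    (α : ℝ) (hα : 0 < α)
    (h1 : ∀ j, (1 / α) * ∑ i, |C i j| ≤ A j j)
    (h2 : ∀ i, α * ∑ j, |C i j| ≤ D i i) :
    (Matrix.fromBlocks A Cᵀ C D).PosSemidef := by
  have hΓ : (fromBlocks A Cᵀ C D).IsHermitian :=
    (isHermitian_iff_isSymm.mpr hA.isSymm).fromBlocks (by simp)
      (isHermitian_iff_isSymm.mpr hD.isSymm)
  refine posSemidef_of_sum_norm_offDiag_mul_le hΓ (w := Sum.elim (fun _ => α) fun _ => 1)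
    (by rintro (_ | _) <;> simp [hα]) ?_
  rintro (j | i)
  · rw [sum_erase_norm_fromBlocks_inl_mul hA]
    simpa [← div_le_iff₀ hα, div_eq_inv_mul] using h1 j
  · rw [sum_erase_norm_fromBlocks_inr_mul hD]
    simpa [← Finset.mul_sum, mul_comm] using h2 i

/-- Lemma `lem:extended-gershgorin`, a consequence of the Gershgorin circle
theorem: a symmetric block matrix `[[A, Cᵀ], [C, D]]` with diagonal blocks `A, D` is positive
semidefinite provided the diagonal entries dominate the weighted absolute row/column sums of the
off-diagonal block. -/
theorem gershgorin_block_psd (m n : ℕ) (hm : 0 < m) (hn : 0 < n)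
    (A : Matrix (Fin m) (Fin m) ℝ) (D : Matrix (Fin n) (Fin n) ℝ)
    (C : Matrix (Fin n) (Fin m) ℝ)
    (hA : A.IsDiag) (hD : D.IsDiag)
    (α : ℝ) (hα : 0 < α)
    (h1 : ∀ j, (1 / α) * ∑ i, |C i j| ≤ A j j)
    (h2 : ∀ i, α * ∑ j, |C i j| ≤ D i i) :
    (Matrix.fromBlocks A Cᵀ C D).PosSemidef :=
  gershgorin_block_psd_general m n A D C hA hD α hα h1 h2
end
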